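/- Let K be a positive integer, let θ[0], …, θ[K−1] be real numbers, and let Ω[k] = (1/K)·∑_{n=0}^{K−1} exp(−i·θ[n])·exp(−2πi·k·n/K). Let ĝ be a nonnegative integer with Ĝ = {−ĝ,…,ĝ}, and let k be an integer such that 2ĝ < |k| and |k| + 2ĝ < K. Then ∑_{k̇=−ĝ}^{ĝ} ( |Ω[k̇]|² + |Ω[k̇+k]|² ) ≤ 1. -/

import Mathlib

open Finset Complex Real

/-- The normalized DFT (nDFT) coefficients of the unit-modulus sequence
`exp(−i·θ[n])`, defined for every integer `k`. -/
noncomputable def nDFT (K : ℕ) (θ : ℕ → ℝ) (k : ℤ) : ℂ :=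
  (1 / (K : ℂ)) * ∑ n ∈ Finset.range K,
    Complex.exp (-Complex.I * (θ n : ℂ)) *
      Complex.exp (-2 * (Real.pi : ℂ) * Complex.I * (k : ℂ) * (n : ℂ) / (K : ℂ))

/-!
Read on `ZMod K`, the nDFT is `K⁻¹` times the discrete Fourier transform `𝓕` of the phase
sequence `j ↦ exp(−i·θ[j])`, so Parseval gives `∑_{k mod K} |Ω[k]|² = 1`. The window
`Ĝ = [−ĝ, ĝ]` and its translate `k + Ĝ` are disjoint, and any two of their elements differ by less
than `K`, so they reduce to pairwise distinct residues mod `K`: the left-hand side is a partial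
sum of the Parseval sum.
-/

open ZMod ComplexConjugate

namespace ZMod

lemma intCast_injOn_of_abs_sub_lt {N : ℕ} {s : Set ℤ} (hs : ∀ a ∈ s, ∀ b ∈ s, |a - b| < N) :
    Set.InjOn (Int.cast : ℤ → ZMod N) s := fun a ha b hb hab => by
  have := Int.eq_zero_of_abs_lt_dvd ((intCast_eq_intCast_iff_dvd_sub a b N).1 hab)
    (by simpa only [abs_sub_comm] using hs a ha b hb)
  omega

variable {N : ℕ} [NeZero N]

lemma sum_eq_sum_range {M : Type*} [AddCommMonoid M] (f : ZMod N → M) :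
    ∑ j, f j = ∑ n ∈ range N, f n :=
  sum_nbij' val (↑) (fun j _ => mem_range.2 (val_lt j)) (fun _ _ => mem_univ _)
    (fun j _ => natCast_zmod_val j) (fun n hn => val_cast_of_lt (mem_range.1 hn))
    (fun j _ => by rw [natCast_zmod_val])

lemma sum_intCast_le_sum_univ {M : Type*} [AddCommMonoid M] [PartialOrder M]
    [IsOrderedAddMonoid M] {f : ZMod N → M} (hf : 0 ≤ f) {s : Finset ℤ}
    (hs : Set.InjOn (Int.cast : ℤ → ZMod N) s) :
    ∑ a ∈ s, f a ≤ ∑ x, f x := by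
  rw [← sum_image hs]
  exact sum_le_univ_sum_of_nonneg fun x => hf x

lemma sum_norm_sq_dft (Φ : ZMod N → ℂ) : ∑ k, ‖𝓕 Φ k‖ ^ 2 = N * ∑ j, ‖Φ j‖ ^ 2 := by
  have key : ∑ k, conj (𝓕 Φ k) * 𝓕 Φ k = ∑ j, conj ((N : ℂ) * Φ j) * Φ j :=
    calc ∑ k, conj (𝓕 Φ k) * 𝓕 Φ k
        = ∑ k, ∑ j, conj (stdAddChar (k * j) * 𝓕 Φ k) * Φ j := by
          refine sum_congr rfl fun k _ => ?_
          rw [dft_apply, mul_sum]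
          refine sum_congr rfl fun j _ => ?_
          rw [map_mul, ← AddChar.map_neg_eq_conj, smul_eq_mul, mul_comm j k]
          ring
      _ = ∑ j, conj (𝓕 (𝓕 Φ) (-j)) * Φ j := by
          rw [sum_comm]
          refine sum_congr rfl fun j _ => ?_
          rw [dft_apply, map_sum, sum_mul]
          simp only [mul_neg, neg_neg, smul_eq_mul]
      _ = ∑ j, conj ((N : ℂ) * Φ j) * Φ j := by simp only [dft_dft, neg_neg, smul_eq_mul]
  have conj_mul_self (z : ℂ) : conj z * z = ((‖z‖ ^ 2 : ℝ) : ℂ) := by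
    rw [mul_comm, RCLike.mul_conj]
    push_cast
    rfl
  simp only [conj_mul_self, map_mul, map_natCast, mul_assoc, ← mul_sum] at key
  exact_mod_cast key

end ZMod

noncomputable def phaseSeq (K : ℕ) (θ : ℕ → ℝ) (j : ZMod K) : ℂ := exp (-I * θ j.val)

lemma norm_phaseSeq {K : ℕ} (θ : ℕ → ℝ) (j : ZMod K) : ‖phaseSeq K θ j‖ = 1 := by
  rw [phaseSeq, neg_mul, mul_comm, ← neg_mul, ← ofReal_neg, norm_exp_ofReal_mul_I]

section

variable {K : ℕ} [NeZero K]

lemma nDFT_eq_inv_mul_dft (θ : ℕ → ℝ) (k : ℤ) :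
    nDFT K θ k = (K : ℂ)⁻¹ * 𝓕 (phaseSeq K θ) k := by
  rw [nDFT, dft_apply, sum_eq_sum_range, one_div]
  congr 1
  refine sum_congr rfl fun n hn => ?_
  rw [phaseSeq, val_cast_of_lt (mem_range.1 hn),
    show -((n : ZMod K) * k) = ((-(n * k) : ℤ) : ZMod K) by push_cast; ring,
    stdAddChar_coe, smul_eq_mul, mul_comm]
  congr 2
  push_cast
  ring

lemma sum_norm_sq_inv_mul_dft_phaseSeq (θ : ℕ → ℝ) :
    ∑ k, ‖(K : ℂ)⁻¹ * 𝓕 (phaseSeq K θ) k‖ ^ 2 = 1 := by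
  have hK : (K : ℝ) ≠ 0 := NeZero.ne _
  simp only [norm_mul, mul_pow, ← mul_sum, sum_norm_sq_dft, norm_phaseSeq, norm_inv,
    Complex.norm_natCast, one_pow, sum_const, card_univ, ZMod.card, nsmul_one]
  field_simp

end

theorem shifted_partial_parseval_of_nDFT
    (K : ℕ) (hK : 0 < K) (θ : ℕ → ℝ)
    (ghat : ℕ) (k : ℤ)
    (h₁ : 2 * (ghat : ℤ) < |k|) (h₂ : |k| + 2 * (ghat : ℤ) < (K : ℤ)) :
    ∑ kdot ∈ Finset.Icc (-(ghat : ℤ)) (ghat : ℤ),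
        (‖nDFT K θ kdot‖ ^ 2 + ‖nDFT K θ (kdot + k)‖ ^ 2) ≤ 1 := by
  have : NeZero K := ⟨hK.ne'⟩
  set G := Icc (-(ghat : ℤ)) ghat
  have hdisj : Disjoint G (G.map (addRightEmbedding k)) := by
    rw [map_add_right_Icc, disjoint_left]
    intro a ha hb
    simp only [G, mem_Icc] at ha hb
    cases abs_cases k <;> omega
  have hinj : Set.InjOn (Int.cast : ℤ → ZMod K) ↑(G ∪ G.map (addRightEmbedding k)) := by
    refine intCast_injOn_of_abs_sub_lt fun a ha b hb => ?_
    simp only [G, coe_union, map_add_right_Icc, Set.mem_union, mem_coe, mem_Icc] at ha hb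
    rw [abs_lt]
    cases abs_cases k <;> omega
  calc ∑ kdot ∈ G, (‖nDFT K θ kdot‖ ^ 2 + ‖nDFT K θ (kdot + k)‖ ^ 2)
      = ∑ a ∈ G ∪ G.map (addRightEmbedding k), ‖nDFT K θ a‖ ^ 2 := by
        rw [sum_union hdisj, sum_map, sum_add_distrib]
        rfl
    _ ≤ ∑ x : ZMod K, ‖(K : ℂ)⁻¹ * 𝓕 (phaseSeq K θ) x‖ ^ 2 := by
        simp only [nDFT_eq_inv_mul_dft]
        exact sum_intCast_le_sum_univ (f := fun x => ‖(K : ℂ)⁻¹ * 𝓕 (phaseSeq K θ) x‖ ^ 2)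
          (fun _ => sq_nonneg _) hinj
    _ = 1 := sum_norm_sq_inv_mul_dft_phaseSeq θ
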